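/- Suppose every round of a core-language algorithm has a uni instruction, none of the round predicates ψ↾_k,…,ψ↾_l is an equalizer, and some round among k,…,l does not have a mult instruction. Then for every θ and every tuple f with {a,b} ⊆ fire_k(f, ψ), both f →[ψ↾_k]_k … →[ψ↾_l]_l bias^?(θ) and f →[ψ↾_k]_k … →[ψ↾_l]_l bias_a^?(θ) are possible sequences of round transitions. -/

import Mathlib

open Classical

namespace HO

/-! ### Values

`none` is the undefined value `?`; defined values are natural numbers, where
`some 0` plays the role of `a` and `some 1` the role of `b` (so `a < b`). -/

abbrev Val := Option ℕ

def aVal : ℕ := 0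
def bVal : ℕ := 1

/-! ### Operations -/

inductive Op where
  | min : Op
  | smor : Op

/-- Minimum of a multiset of defined values (`none` if the multiset is empty). -/
noncomputable def msMin (S : Multiset ℕ) : Option ℕ :=
  if h : S.toFinset.Nonempty then some (S.toFinset.min' h) else none

/-- Smallest most frequent value of a multiset (`none` if the multiset is empty). -/
noncomputable def msSmor (S : Multiset ℕ) : Option ℕ :=
  if h : (S.toFinset.filter fun v => ∀ w ∈ S.toFinset, S.count w ≤ S.count v).Nonempty
  then some ((S.toFinset.filter fun v => ∀ w ∈ S.toFinset, S.count w ≤ S.count v).min' h)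
  else none

noncomputable def Op.apply : Op → Multiset ℕ → Option ℕ
  | Op.min, S => msMin S
  | Op.smor, S => msSmor S

/-! ### Rounds

A round consists of at most one `uni` instruction followed by a list of `mult`
instructions with non-increasing thresholds, all thresholds lying in `[0,1)`. -/

structure Round where
  uniThr : Option ℝ
  mults : List (ℝ × Op)
  wfU : ∀ t ∈ uniThr, 0 ≤ t ∧ t < 1
  wfM : ∀ q ∈ mults, 0 ≤ q.1 ∧ q.1 < 1
  sorted : (mults.map Prod.fst).Chain' (· ≥ ·)

def Round.hasUni (R : Round) : Prop := R.uniThr.isSome = true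
def Round.hasMult (R : Round) : Prop := R.mults ≠ []

/-- `thr_u^i`: the threshold of the uni instruction, `-1` if absent. -/
noncomputable def Round.thrU (R : Round) : ℝ := R.uniThr.getD (-1)

noncomputable def minThr : List ℝ → ℝ
  | [] => -1
  | [t] => t
  | t :: ts => min t (minThr ts)

/-- `thr_m^{i,k}`: the smallest threshold of a mult instruction, `-1` if absent. -/
noncomputable def Round.thrM (R : Round) : ℝ := minThr (R.mults.map Prod.fst)

/-- Result of the first applicable `mult` instruction. -/
noncomputable def firstMult (n : ℕ) (S : Multiset ℕ) : List (ℝ × Op) → Option ℕ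
  | [] => none
  | (t, op) :: rest =>
      if 1 < S.toFinset.card ∧ t * n < (S.card : ℝ) then op.apply S
      else firstMult n S rest

/-- `update_i(H)`: the result of the first instruction of the round whose condition
is satisfied by `H − {?}`, and `?` (i.e. `none`) if no condition applies. -/
noncomputable def Round.update (R : Round) (n : ℕ) (H : Multiset Val) : Option ℕ :=
  if ∃ t ∈ R.uniThr,
      (H.filterMap id).toFinset.card = 1 ∧ t * n < ((H.filterMap id).card : ℝ)
  then msMin (H.filterMap id)
  else firstMult n (H.filterMap id) R.mults

/-! ### Communication predicates for a round -/

/-- A conjunction of atomic communication predicates for one round: possibly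
`φ_=` (field `eq`) and possibly `φ_thr` (field `thr`, with `0 ≤ thr < 1`). -/
structure RoundPred where
  eq : Bool
  thr : Option ℝ
  wf : ∀ t ∈ thr, 0 ≤ t ∧ t < 1

/-- `thr_i(ψ)`: the threshold appearing in the predicate, `-1` if absent. -/
noncomputable def RoundPred.thrVal (φ : RoundPred) : ℝ := φ.thr.getD (-1)

def RoundPred.isEqualizer (φ : RoundPred) : Prop := φ.eq = true

/-- Satisfaction of a round predicate by a tuple of heard-of multisets. -/
def RoundPred.sat {α : Type} (φ : RoundPred) (n : ℕ) (Hs : Fin n → Multiset α) : Prop :=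
  (φ.eq = true → ∀ p q, Hs p = Hs q) ∧
  ∀ t ∈ φ.thr, ∀ p, t * n < ((Hs p).card : ℝ)

/-- Logical implication between round predicates. -/
def RoundPred.implies (φ φ' : RoundPred) : Prop :=
  ∀ (α : Type) (n : ℕ) (Hs : Fin n → Multiset α), φ.sat n Hs → φ'.sat n Hs

/-! ### Tuples of values -/

/-- The multiset of values of a tuple. -/
def msetOf {n : ℕ} (f : Fin n → Val) : Multiset Val := Finset.univ.val.map f

def soloB (n : ℕ) : Fin n → Val := fun _ => some bVal
def soloA (n : ℕ) : Fin n → Val := fun _ => some aVal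
def soloQ (n : ℕ) : Fin n → Val := fun _ => none

/-- `bias(θ)`: a tuple over `{a,b}` with `θ·n` entries equal to `b`. -/
def isBias {n : ℕ} (θ : ℝ) (f : Fin n → Val) : Prop :=
  (∀ p, f p = some aVal ∨ f p = some bVal) ∧
  ((Finset.univ.filter fun p => f p = some bVal).card : ℝ) = θ * n

/-- `spread = bias(1/2)`. -/
def isSpread {n : ℕ} (f : Fin n → Val) : Prop := isBias (1/2) f

/-- `bias^?(θ)`: a tuple over `{?,b}` with `θ·n` entries equal to `b`. -/
def isBiasQ {n : ℕ} (θ : ℝ) (f : Fin n → Val) : Prop :=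
  (∀ p, f p = none ∨ f p = some bVal) ∧
  ((Finset.univ.filter fun p => f p = some bVal).card : ℝ) = θ * n

/-- `bias_a^?(θ)`: a tuple over `{?,a}` with `θ·n` entries equal to `a`. -/
def isBiasQa {n : ℕ} (θ : ℝ) (f : Fin n → Val) : Prop :=
  (∀ p, f p = none ∨ f p = some aVal) ∧
  ((Finset.univ.filter fun p => f p = some aVal).card : ℝ) = θ * n

/-! ### Round transitions -/

/-- Round transition `f →[φ]_i f'`: every process receives a sub-multiset of the
multiset of sent values, the tuple of heard-of multisets jointly satisfies `φ`,
and every process updates its variable accordingly. -/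
def roundTrans (R : Round) (φ : RoundPred) {n : ℕ} (f f' : Fin n → Val) : Prop :=
  ∃ Hs : Fin n → Multiset Val,
    (∀ p, Hs p ≤ msetOf f) ∧ φ.sat n Hs ∧ ∀ p, f' p = R.update n (Hs p)

/-- `d ∈ fire_i(f,φ)`. -/
def fire (R : Round) (φ : RoundPred) {n : ℕ} (f : Fin n → Val) (d : Val) : Prop :=
  ∃ f' : Fin n → Val, roundTrans R φ f f' ∧ ∃ p, f' p = d

/-! ### Algorithms -/

/-- An algorithm of the core language: rounds `1,…,r` (`r ≥ 2`), with a designated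
input-update round `ir` (`1 ≤ ir < r`). -/
structure Algo where
  r : ℕ
  rounds : ℕ → Round
  ir : ℕ
  two_le_r : 2 ≤ r
  one_le_ir : 1 ≤ ir
  ir_lt_r : ir < r

noncomputable def Algo.thrU (A : Algo) (i : ℕ) : ℝ := (A.rounds i).thrU
noncomputable def Algo.thrM (A : Algo) (i : ℕ) : ℝ := (A.rounds i).thrM
def Algo.hasUni (A : Algo) (i : ℕ) : Prop := (A.rounds i).hasUni
def Algo.hasMult (A : Algo) (i : ℕ) : Prop := (A.rounds i).hasMult

/-- A phase predicate: a conjunction of atomic predicates for every round. -/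
abbrev PhasePred := ℕ → RoundPred

/-- Phase transition `(f,d) →ψ (f',d')`. -/
def phaseTrans (A : Algo) (ψ : PhasePred) {n : ℕ} (f d f' d' : Fin n → Val) : Prop :=
  ∃ g : ℕ → Fin n → Val,
    g 0 = f ∧
    (∀ i, 1 ≤ i → i ≤ A.r → roundTrans (A.rounds i) (ψ i) (g (i - 1)) (g i)) ∧
    (∀ p, f' p = if g A.ir p = none then f p else g A.ir p) ∧
    (∀ p, d' p = if d p = none then g A.r p else d p)

/-- A chain of round transitions for rounds `k,…,l`. -/
def roundChain (A : Algo) (ψ : PhasePred) (k l : ℕ) {n : ℕ} (f f' : Fin n → Val) : Prop :=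
  ∃ g : ℕ → Fin n → Val,
    g (k - 1) = f ∧ g l = f' ∧
    ∀ i, k ≤ i → i ≤ l → roundTrans (A.rounds i) (ψ i) (g (i - 1)) (g i)

/-! ### Syntactic notions -/

/-- Round `i` is preserving w.r.t. `ψ`. -/
def Algo.preserving (A : Algo) (ψ : PhasePred) (i : ℕ) : Prop :=
  ¬ A.hasUni i ∨ ¬ A.hasMult i ∨ (ψ i).thrVal < max (A.thrU i) (A.thrM i)

/-- Round `i` is solo-safe w.r.t. `ψ`. -/
def Algo.soloSafe (A : Algo) (ψ : PhasePred) (i : ℕ) : Prop :=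
  0 ≤ A.thrU i ∧ A.thrU i ≤ (ψ i).thrVal

/-- The border threshold `thr̄ = max(1 − thr_u^1, 1 − thr_m^{1,k}/2)`. -/
noncomputable def Algo.borderThr (A : Algo) : ℝ :=
  max (1 - A.thrU 1) (1 - A.thrM 1 / 2)

/-- `ψ` is a decider: all rounds are solo-safe w.r.t. `ψ`. -/
def Algo.decider (A : Algo) (ψ : PhasePred) : Prop :=
  ∀ i, 1 ≤ i → i ≤ A.r → A.soloSafe ψ i

/-- `ψ` is a unifier. -/
def Algo.unifier (A : Algo) (ψ : PhasePred) : Prop :=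
  A.thrM 1 ≤ (ψ 1).thrVal ∧
  (A.thrU 1 ≤ (ψ 1).thrVal ∨ A.borderThr ≤ (ψ 1).thrVal) ∧
  ∃ i, 1 ≤ i ∧ i ≤ A.ir ∧ (ψ i).isEqualizer ∧
    (∀ j, 2 ≤ j → j ≤ i → ¬ A.preserving ψ j) ∧
    (∀ j, i < j → j ≤ A.ir → A.soloSafe ψ j)

/-- The algorithm is syntactically safe. -/
def Algo.syntSafe (A : Algo) : Prop :=
  A.hasMult 1 ∧
  (∀ i, 1 ≤ i → i ≤ A.r → A.hasUni i) ∧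
  (∀ q ∈ (A.rounds 1).mults, q.2 = Op.smor) ∧
  1 - A.thrU (A.ir + 1) ≤ A.thrM 1 / 2 ∧
  1 - A.thrU (A.ir + 1) ≤ A.thrU 1

/-- Assumption (A) relative to the global predicate `gl`. -/
def Algo.assumptionA (A : Algo) (gl : PhasePred) : Prop :=
  ∀ i, 1 ≤ i → i ≤ A.r →
    (∀ j, 1 ≤ j → j < i → ¬ A.preserving gl j) →
    (A.hasUni i → (gl i).thrVal ≤ A.thrU i) ∧
    (A.hasMult i → (gl i).thrVal ≤ A.thrM i)

/-- Proviso (P): the global predicate has no equalizer and round `ir+1` has no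
mult instruction. -/
def Algo.provisoP (A : Algo) (gl : PhasePred) : Prop :=
  (∀ i, 1 ≤ i → i ≤ A.r → ¬ (gl i).isEqualizer) ∧ ¬ A.hasMult (A.ir + 1)

/-- Removing all mult instructions of a round. -/
def Round.dropMults (R : Round) : Round :=
  { uniThr := R.uniThr, mults := [], wfU := R.wfU,
    wfM := by simp, sorted := by first | exact List.IsChain.nil | exact List.chain'_nil | simp [List.Chain'] }

/-- Removing all mult instructions of round `i` of an algorithm. -/
def Algo.dropMultsAt (A : Algo) (i : ℕ) : Algo :=
  { A with rounds := fun j => if j = i then (A.rounds j).dropMults else A.rounds j }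

/-! ### Communication predicates, executions, consensus -/

/-- A communication predicate `(G ψ̄) ∧ F(ψ^1 ∧ F(ψ^2 ∧ … ∧ F ψ^k))`:
a global phase predicate and sporadic phase predicates `ψ^1,…,ψ^k`. -/
structure CommPred where
  glob : PhasePred
  k : ℕ
  spor : ℕ → PhasePred

/-- Roundwise implication between phase predicates of an algorithm. -/
def predImplies (A : Algo) (ψ ψ' : PhasePred) : Prop :=
  ∀ i, 1 ≤ i → i ≤ A.r → (ψ i).implies (ψ' i)

/-- An execution of an algorithm respecting a communication predicate: an infinite
sequence of phase transitions under the global predicate, together with an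
increasing sequence of times at which the sporadic predicates hold. -/
structure Exec (A : Algo) (C : CommPred) (n : ℕ) where
  inp : ℕ → Fin n → Val
  dec : ℕ → Fin n → Val
  inp0 : ∀ p, inp 0 p ≠ none
  dec0 : ∀ p, dec 0 p = none
  step : ∀ s, phaseTrans A C.glob (inp s) (dec s) (inp (s + 1)) (dec (s + 1))
  sporTime : ℕ → ℕ
  mono : StrictMono sporTime
  sporStep : ∀ i, 1 ≤ i → i ≤ C.k →
    phaseTrans A (C.spor i) (inp (sporTime i)) (dec (sporTime i))
      (inp (sporTime i + 1)) (dec (sporTime i + 1))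

/-- Agreement: in every reachable state, any two non-`?` decision values coincide. -/
def Agreement (A : Algo) (C : CommPred) : Prop :=
  ∀ n, 0 < n → ∀ E : Exec A C n, ∀ s p q v w,
    E.dec s p = some v → E.dec s q = some w → v = w

/-- Termination: every execution reaches a state where all processes have decided. -/
def Termination (A : Algo) (C : CommPred) : Prop :=
  ∀ n, 0 < n → ∀ E : Exec A C n, ∃ s, ∀ p, E.dec s p ≠ none

/-- Solving consensus: agreement and termination. -/
def SolvesConsensus (A : Algo) (C : CommPred) : Prop :=
  Agreement A C ∧ Termination A C

/-- A tuple over the two values `a`, `b` and the undefined value `?`. -/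
def twoValuedQ {n : ℕ} (f : Fin n → Val) : Prop :=
  ∀ p, f p = none ∨ f p = some aVal ∨ f p = some bVal

/-! Without an equalizer the heard-of multisets of different processes are unrelated, so a round
can produce every tuple over the values that single processes can adopt. Round `k` can
produce `a` and `b` by assumption, and `?` as well if it has no mult instruction (hear both).
While rounds have mult instructions, the tuple with one `a` (first mult operation `min`) or with
an `a`-minority of about `n/2` (`smor`) lets the next round produce `a` (hear a mixed multiset) and
`b` (hear only `b`s, resp. everything). The first round without mult instruction turns `n - 1`
copies of `w` and one other value into `w` (hear the `w`s) or `?` (hear both values). Afterwards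
the tuple with `⌊thr_u·n⌋ + 1` copies of `w` and `?` elsewhere gives `w` when everything is
heard and `?` when one `w` is missed. All counts fit once every threshold stays two processes
below `n`, which holds for all large `n`. -/

section Updates

@[simp]
lemma filterMap_id_replicate_some (c v : ℕ) :
    (Multiset.replicate c (some v : Val)).filterMap id = Multiset.replicate c v := by
  induction c with
  | zero => rfl
  | succ c ih =>
    rw [Multiset.replicate_succ, Multiset.replicate_succ,
      Multiset.filterMap_cons_some id _ _ rfl, ih]

@[simp]
lemma filterMap_id_replicate_none (c : ℕ) :
    (Multiset.replicate c (none : Val)).filterMap id = 0 := by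
  induction c with
  | zero => rfl
  | succ c ih => rw [Multiset.replicate_succ, Multiset.filterMap_cons_none _ _ rfl, ih]

lemma eq_or_eq_of_mem_replicate_add {α : Type*} {a b v : α} {p q : ℕ}
    (hv : v ∈ Multiset.replicate p a + Multiset.replicate q b) : v = a ∨ v = b :=
  (Multiset.mem_add.1 hv).imp Multiset.eq_of_mem_replicate Multiset.eq_of_mem_replicate

lemma one_lt_card_toFinset {S : Multiset ℕ} {x y : ℕ} (hx : x ∈ S) (hy : y ∈ S)
    (hxy : x ≠ y) :
    1 < S.toFinset.card :=
  Finset.one_lt_card.2 ⟨x, Multiset.mem_toFinset.2 hx, y, Multiset.mem_toFinset.2 hy, hxy⟩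

lemma msMin_eq_some {S : Multiset ℕ} {v : ℕ} (hv : v ∈ S) (hle : ∀ w ∈ S, v ≤ w) :
    msMin S = some v := by
  have hv' : v ∈ S.toFinset := Multiset.mem_toFinset.2 hv
  rw [msMin, dif_pos ⟨v, hv'⟩]
  exact congrArg some <| le_antisymm (Finset.min'_le _ _ hv')
    (Finset.le_min' _ _ _ fun w hw => hle w (Multiset.mem_toFinset.1 hw))

lemma msSmor_eq_some {S : Multiset ℕ} {v : ℕ} (hv : v ∈ S)
    (hmax : ∀ w ∈ S, S.count w ≤ S.count v)
    (hmin : ∀ w ∈ S, S.count w = S.count v → v ≤ w) : msSmor S = some v := by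
  have hv' : v ∈ S.toFinset.filter fun x => ∀ w ∈ S.toFinset, S.count w ≤ S.count x :=
    Finset.mem_filter.2 ⟨Multiset.mem_toFinset.2 hv,
      fun w hw => hmax w (Multiset.mem_toFinset.1 hw)⟩
  rw [msSmor, dif_pos ⟨v, hv'⟩]
  refine congrArg some <| le_antisymm (Finset.min'_le _ _ hv') (Finset.le_min' _ _ _ ?_)
  intro w hw
  obtain ⟨hwS, hwmax⟩ := Finset.mem_filter.1 hw
  have hwS : w ∈ S := Multiset.mem_toFinset.1 hwS
  exact hmin w hwS (le_antisymm (hmax w hwS) (hwmax v (Multiset.mem_toFinset.2 hv)))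

lemma msMin_mem {S : Multiset ℕ} {v : ℕ} (h : msMin S = some v) : v ∈ S := by
  rw [msMin] at h
  split at h
  · rw [← Option.some_inj.1 h, ← Multiset.mem_toFinset]
    exact Finset.min'_mem _ _
  · cases h

lemma msSmor_mem {S : Multiset ℕ} {v : ℕ} (h : msSmor S = some v) : v ∈ S := by
  rw [msSmor] at h
  split at h
  · rw [← Option.some_inj.1 h, ← Multiset.mem_toFinset]
    exact (Finset.mem_filter.1 (Finset.min'_mem _ _)).1
  · cases h

lemma firstMult_mem {n : ℕ} {S : Multiset ℕ} {v : ℕ} :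
    ∀ {L : List (ℝ × Op)}, firstMult n S L = some v → v ∈ S
  | [], h => by cases h
  | (t, op) :: L, h => by
    rw [firstMult] at h
    split at h
    · cases op
      exacts [msMin_mem h, msSmor_mem h]
    · exact firstMult_mem h

lemma firstMult_of_card_toFinset_le_one {n : ℕ} {S : Multiset ℕ} (h : S.toFinset.card ≤ 1) :
    ∀ L : List (ℝ × Op), firstMult n S L = none
  | [] => rfl
  | (t, op) :: L => by
    rw [firstMult, if_neg (by omega), firstMult_of_card_toFinset_le_one h L]

lemma firstMult_cons_of_lt {n : ℕ} {S : Multiset ℕ} {t : ℝ} {op : Op} (L : List (ℝ × Op))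
    (hS : 1 < S.toFinset.card) (ht : t * n < S.card) :
    firstMult n S ((t, op) :: L) = op.apply S := by
  rw [firstMult, if_pos ⟨hS, ht⟩]

lemma msMin_pair {p q x y : ℕ} (hxy : x ≤ y) (hp : p ≠ 0) :
    msMin (Multiset.replicate p x + Multiset.replicate q y) = some x := by
  refine msMin_eq_some (Multiset.mem_add.2 (.inl (Multiset.mem_replicate.2 ⟨hp, rfl⟩)))
    fun w hw => ?_
  rcases eq_or_eq_of_mem_replicate_add hw with rfl | rfl
  exacts [le_rfl, hxy]

lemma msSmor_pair_of_le {p q x y : ℕ} (hxy : x < y) (hp : p ≠ 0) (hqp : q ≤ p) :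
    msSmor (Multiset.replicate p x + Multiset.replicate q y) = some x := by
  refine msSmor_eq_some (Multiset.mem_add.2 (.inl (Multiset.mem_replicate.2 ⟨hp, rfl⟩)))
    (fun w hw => ?_) fun w hw _ => ?_ <;> rcases eq_or_eq_of_mem_replicate_add hw with rfl | rfl
  · simp
  · simp [Multiset.count_replicate, hxy.ne, hxy.ne', hqp]
  · rfl
  · exact hxy.le

lemma msSmor_pair_of_lt {p q x y : ℕ} (hxy : x < y) (hpq : p < q) :
    msSmor (Multiset.replicate p x + Multiset.replicate q y) = some y := by
  refine msSmor_eq_some (Multiset.mem_add.2 (.inr (Multiset.mem_replicate.2 ⟨by omega, rfl⟩)))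
    (fun w hw => ?_) fun w hw hc => ?_ <;> rcases eq_or_eq_of_mem_replicate_add hw with rfl | rfl
  · simp [Multiset.count_replicate, hxy.ne, hxy.ne', hpq.le]
  · simp
  · simp [Multiset.count_replicate, hxy.ne, hxy.ne'] at hc; omega
  · rfl

variable {R : Round} {n : ℕ} {H : Multiset Val}

lemma Round.uniThr_eq_some_thrU (hu : R.hasUni) : R.uniThr = some R.thrU := by
  obtain ⟨t, ht⟩ := Option.isSome_iff_exists.1 hu
  simp [Round.thrU, ht]

lemma Round.thrU_nonneg (hu : R.hasUni) : 0 ≤ R.thrU :=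
  (R.wfU _ (R.uniThr_eq_some_thrU hu)).1

lemma Round.mem_of_update_eq_some {v : ℕ} (h : R.update n H = some v) : v ∈ H.filterMap id := by
  rw [Round.update] at h
  split at h
  exacts [msMin_mem h, firstMult_mem h]

lemma Round.update_of_filterMap_eq_replicate (hu : R.hasUni) {s x : ℕ}
    (hH : H.filterMap id = Multiset.replicate s x) :
    R.update n H = if R.thrU * n < s then some x else none := by
  have hnonneg := mul_nonneg (R.thrU_nonneg hu) n.cast_nonneg
  rw [Round.update, hH, R.uniThr_eq_some_thrU hu, Multiset.toFinset_replicate]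
  rcases Nat.eq_zero_or_pos s with rfl | hs
  · simp only [Nat.cast_zero, not_lt.2 hnonneg, if_false]
    exact firstMult_of_card_toFinset_le_one (by simp) _
  · simp only [if_neg hs.ne', Finset.card_singleton, true_and, Option.mem_def,
      Option.some_inj, exists_eq_left', Multiset.card_replicate]
    split_ifs
    · exact msMin_eq_some (Multiset.mem_replicate.2 ⟨hs.ne', rfl⟩)
        fun w hw => (Multiset.eq_of_mem_replicate hw).ge
    · refine firstMult_of_card_toFinset_le_one ?_ _
      rw [Multiset.toFinset_replicate, if_neg hs.ne', Finset.card_singleton]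

lemma Round.update_of_one_lt_card (h : 1 < (H.filterMap id).toFinset.card) :
    R.update n H = firstMult n (H.filterMap id) R.mults := by
  rw [Round.update, if_neg]
  rintro ⟨-, -, h1, -⟩
  omega

end Updates

section Emits

variable {R : Round} {φ : RoundPred} {n : ℕ}

def Emits (R : Round) (φ : RoundPred) (n : ℕ) (s : Multiset Val) (d : Val) : Prop :=
  ∃ H ≤ s, (∀ t ∈ φ.thr, t * n < (H.card : ℝ)) ∧ R.update n H = d

/-- Without an equalizer, some tuple over `V` is mapped to every tuple over `W`
(`roundTrans_of_forall_emits`). -/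
def Round.Bridges (R : Round) (φ : RoundPred) (n : ℕ) (V W : Set Val) : Prop :=
  ∃ s : Multiset Val, s.card = n ∧ (∀ v ∈ s, v ∈ V) ∧ ∀ d ∈ W, Emits R φ n s d

def HasRoom (R : Round) (φ : RoundPred) (n : ℕ) : Prop :=
  φ.thrVal * n + 2 < n ∧ R.thrU * n + 2 < n ∧ ∀ q ∈ R.mults, q.1 * n + 2 < n

lemma RoundPred.thrVal_lt_one (φ : RoundPred) : φ.thrVal < 1 := by
  rw [RoundPred.thrVal]
  cases h : φ.thr with
  | none => norm_num
  | some t => exact (φ.wf t h).2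

lemma Round.thrU_lt_one (R : Round) : R.thrU < 1 := by
  rw [Round.thrU]
  cases h : R.uniThr with
  | none => norm_num
  | some t => exact (R.wfU t h).2

lemma eventually_mul_add_two_lt {x : ℝ} (hx : x < 1) :
    ∀ᶠ n : ℕ in Filter.atTop, x * n + 2 < n :=
  (tendsto_natCast_atTop_atTop.eventually_gt_atTop (2 / (1 - x))).mono fun n hn => by
    rw [div_lt_iff₀ (by linarith)] at hn
    linarith

lemma eventually_hasRoom (R : Round) (φ : RoundPred) :
    ∀ᶠ n : ℕ in Filter.atTop, HasRoom R φ n := by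
  have hmults : ∀ᶠ n : ℕ in Filter.atTop, ∀ q ∈ R.mults.toFinset, q.1 * n + 2 < n :=
    (Filter.eventually_all_finset _).2 fun q hq =>
      eventually_mul_add_two_lt (R.wfM q (List.mem_toFinset.1 hq)).2
  filter_upwards [eventually_mul_add_two_lt φ.thrVal_lt_one,
    eventually_mul_add_two_lt R.thrU_lt_one, hmults] with n h₁ h₂ h₃
  exact ⟨h₁, h₂, fun q hq => h₃ q (List.mem_toFinset.2 hq)⟩

lemma RoundPred.thr_lt_of_thrVal_lt {c : ℝ} (h : φ.thrVal * n < c) :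
    ∀ t ∈ φ.thr, t * n < c := by
  intro t ht
  rwa [RoundPred.thrVal, Option.mem_def.1 ht, Option.getD_some] at h

lemma roundTrans_of_forall_emits (heq : ¬ φ.isEqualizer) {f g : Fin n → Val}
    (h : ∀ p, Emits R φ n (msetOf f) (g p)) : roundTrans R φ f g := by
  choose H hle hthr hupd using h
  exact ⟨H, hle, ⟨fun h => absurd h heq, fun t ht p => hthr p t ht⟩, fun p => (hupd p).symm⟩

lemma emits_of_fire {f : Fin n → Val} {d : Val} (h : fire R φ f d) :
    Emits R φ n (msetOf f) d := by
  obtain ⟨g, ⟨H, hle, hsat, hupd⟩, p, rfl⟩ := h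
  exact ⟨H p, hle p, fun t ht => hsat.2 t ht p, (hupd p).symm⟩

lemma emits_none_of_mults_eq_nil (hm : R.mults = []) {s : Multiset Val} {x y : ℕ} (hxy : x ≠ y)
    (hx : Emits R φ n s (some x)) (hy : Emits R φ n s (some y)) : Emits R φ n s none := by
  obtain ⟨Hx, hHx, hthr, hupx⟩ := hx
  obtain ⟨Hy, hHy, -, hupy⟩ := hy
  have hmem {H : Multiset Val} (hH : H ≤ Hx ∪ Hy) {v : ℕ} (hv : R.update n H = some v) :
      v ∈ (Hx ∪ Hy).filterMap id :=
    Multiset.mem_of_le (Multiset.filterMap_le_filterMap id hH) (R.mem_of_update_eq_some hv)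
  refine ⟨Hx ∪ Hy, Multiset.union_le hHx hHy, fun t ht => (hthr t ht).trans_le ?_, ?_⟩
  · exact_mod_cast Multiset.card_le_card Multiset.le_union_left
  · rw [R.update_of_one_lt_card (one_lt_card_toFinset (hmem Multiset.le_union_left hupx)
      (hmem Multiset.le_union_right hupy) hxy), hm, firstMult]

lemma emits_some_of_filterMap_eq_replicate (hu : R.hasUni) {s H : Multiset Val} (hH : H ≤ s)
    (hthr : φ.thrVal * n < H.card) {m x : ℕ} (hf : H.filterMap id = Multiset.replicate m x)
    (hm : R.thrU * n < m) : Emits R φ n s (some x) :=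
  ⟨H, hH, φ.thr_lt_of_thrVal_lt hthr,
    by rw [R.update_of_filterMap_eq_replicate hu hf, if_pos hm]⟩

lemma emits_none_of_filterMap_eq_replicate (hu : R.hasUni) {s H : Multiset Val} (hH : H ≤ s)
    (hthr : φ.thrVal * n < H.card) {m x : ℕ} (hf : H.filterMap id = Multiset.replicate m x)
    (hm : m ≤ R.thrU * n) : Emits R φ n s none :=
  ⟨H, hH, φ.thr_lt_of_thrVal_lt hthr,
    by rw [R.update_of_filterMap_eq_replicate hu hf, if_neg hm.not_gt]⟩

lemma emits_of_one_lt_card {s H : Multiset Val} (hH : H ≤ s) (hthr : φ.thrVal * n < H.card)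
    (hf : 1 < (H.filterMap id).toFinset.card) {d : Val}
    (hd : firstMult n (H.filterMap id) R.mults = d) : Emits R φ n s d :=
  ⟨H, hH, φ.thr_lt_of_thrVal_lt hthr, (R.update_of_one_lt_card hf).trans hd⟩

end Emits

section Bridges

variable {R : Round} {φ : RoundPred} {n : ℕ}

lemma filterMap_id_pair (p q x y : ℕ) :
    (Multiset.replicate p (some x) + Multiset.replicate q (some y)).filterMap id =
      Multiset.replicate p x + Multiset.replicate q y := by
  simp only [Multiset.filterMap_add, filterMap_id_replicate_some]

lemma one_lt_card_toFinset_pair {p q x y : ℕ} (hxy : x ≠ y) (hp : p ≠ 0) (hq : q ≠ 0) :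
    1 < ((Multiset.replicate p (some x) + Multiset.replicate q (some y)).filterMap
      id).toFinset.card :=
  filterMap_id_pair p q x y ▸
    one_lt_card_toFinset (Multiset.mem_add.2 (.inl (Multiset.mem_replicate.2 ⟨hp, rfl⟩)))
      (Multiset.mem_add.2 (.inr (Multiset.mem_replicate.2 ⟨hq, rfl⟩))) hxy

lemma cast_card_replicate_add {α : Type*} (p q : ℕ) (a b : α) :
    ((Multiset.replicate p a + Multiset.replicate q b).card : ℝ) = p + q := by
  simp

lemma emits_apply_pair {t : ℝ} {op : Op} {L : List (ℝ × Op)} (hR : R.mults = (t, op) :: L)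
    {s : Multiset Val} {p q x y : ℕ} (hxy : x ≠ y) (hp : p ≠ 0) (hq : q ≠ 0)
    (hH : Multiset.replicate p (some x) + Multiset.replicate q (some y) ≤ s)
    (hthr : φ.thrVal * n < p + q) (ht : t * n < p + q) {d : Val}
    (hd : op.apply (Multiset.replicate p x + Multiset.replicate q y) = d) : Emits R φ n s d := by
  have hmixed := one_lt_card_toFinset_pair hxy hp hq
  refine emits_of_one_lt_card hH (by rwa [cast_card_replicate_add]) hmixed ?_
  rw [filterMap_id_pair] at hmixed ⊢
  rw [hR, firstMult_cons_of_lt _ hmixed (by simpa using ht), hd]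

lemma HasRoom.three_le (hn : HasRoom R φ n) (hu : R.hasUni) : 3 ≤ n := by
  have := mul_nonneg (R.thrU_nonneg hu) n.cast_nonneg
  have : (2 : ℝ) < n := by linarith [hn.2.1]
  exact_mod_cast this

lemma Round.bridges_pair_of_min (hu : R.hasUni) (hn : HasRoom R φ n) {t : ℝ}
    {L : List (ℝ × Op)} (hR : R.mults = (t, Op.min) :: L) (ht : t * n + 2 < n) {x y : ℕ}
    (hxy : x < y) : R.Bridges φ n {some x, some y} {some x, some y} := by
  have h3 := hn.three_le hu
  have hcast : ((n - 1 : ℕ) : ℝ) = n - 1 := by rw [Nat.cast_sub (by omega), Nat.cast_one]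
  refine ⟨Multiset.replicate 1 (some x) + Multiset.replicate (n - 1) (some y), by simp; omega,
    fun _ => eq_or_eq_of_mem_replicate_add, ?_⟩
  rintro d (rfl | rfl)
  · exact emits_apply_pair hR hxy.ne one_ne_zero (by omega) le_rfl
      (by rw [hcast]; linarith [hn.1]) (by rw [hcast]; linarith) (msMin_pair hxy.le one_ne_zero)
  · exact emits_some_of_filterMap_eq_replicate hu (Multiset.le_add_left _ _)
      (by rw [Multiset.card_replicate, hcast]; linarith [hn.1])
      (filterMap_id_replicate_some (n - 1) y) (by rw [hcast]; linarith [hn.2.1])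

lemma Round.bridges_pair_of_smor (hn : HasRoom R φ n) (h3 : 3 ≤ n) {t : ℝ}
    {L : List (ℝ × Op)} (hR : R.mults = (t, Op.smor) :: L) (ht : t * n + 2 < n) {x y : ℕ}
    (hxy : x < y) : R.Bridges φ n {some x, some y} {some x, some y} := by
  set c := (n - 1) / 2
  have hc : (n : ℝ) ≤ c + c + 2 := by exact_mod_cast (by omega : n ≤ c + c + 2)
  have hcn : (c : ℝ) + (n - c : ℕ) = n := by exact_mod_cast (by omega : c + (n - c) = n)
  refine ⟨Multiset.replicate c (some x) + Multiset.replicate (n - c) (some y), by simp; omega,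
    fun _ => eq_or_eq_of_mem_replicate_add, ?_⟩
  rintro d (rfl | rfl)
  · exact emits_apply_pair (p := c) (q := c) hR hxy.ne (by omega) (by omega)
      (add_le_add le_rfl ((Multiset.replicate_le_replicate _).2 (by omega)))
      (by linarith [hn.1]) (by linarith) (msSmor_pair_of_le hxy (by omega) le_rfl)
  · exact emits_apply_pair hR hxy.ne (by omega) (by omega) le_rfl
      (by linarith [hn.1]) (by linarith) (msSmor_pair_of_lt hxy (by omega))

lemma Round.bridges_pair (hu : R.hasUni) (hm : R.hasMult) (hn : HasRoom R φ n) {x y : ℕ}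
    (hxy : x < y) : R.Bridges φ n {some x, some y} {some x, some y} := by
  obtain ⟨⟨t, op⟩, L, hR⟩ := List.exists_cons_of_ne_nil hm
  have ht : t * n + 2 < n := hn.2.2 (t, op) (hR ▸ List.mem_cons_self ..)
  cases op with
  | min => exact R.bridges_pair_of_min hu hn hR ht hxy
  | smor => exact R.bridges_pair_of_smor hn (hn.three_le hu) hR ht hxy

lemma Round.bridges_none_of_mults_eq_nil (hu : R.hasUni) (hm : R.mults = [])
    (hn : HasRoom R φ n) {x y : ℕ} (hxy : x ≠ y) :
    R.Bridges φ n {some x, some y} {none, some x} := by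
  have h3 := hn.three_le hu
  have hcast : ((n - 1 : ℕ) : ℝ) = n - 1 := by rw [Nat.cast_sub (by omega), Nat.cast_one]
  refine ⟨Multiset.replicate (n - 1) (some x) + Multiset.replicate 1 (some y), by simp; omega,
    fun _ => eq_or_eq_of_mem_replicate_add, ?_⟩
  rintro d (rfl | rfl)
  · exact emits_of_one_lt_card le_rfl (by rw [cast_card_replicate_add, hcast]; linarith [hn.1])
      (one_lt_card_toFinset_pair hxy (by omega) one_ne_zero) (by rw [hm]; rfl)
  · exact emits_some_of_filterMap_eq_replicate hu (Multiset.le_add_right _ _)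
      (by rw [Multiset.card_replicate, hcast]; linarith [hn.1])
      (filterMap_id_replicate_some (n - 1) x) (by rw [hcast]; linarith [hn.2.1])

lemma Round.bridges_none (hu : R.hasUni) (hn : HasRoom R φ n) (w : ℕ) :
    R.Bridges φ n {none, some w} {none, some w} := by
  have hu0 := R.thrU_nonneg hu
  set m := ⌊R.thrU * n⌋₊
  have hmn : m < n := (Nat.floor_lt (by positivity)).2 (by linarith [hn.2.1])
  have hcn : ((n - (m + 1) : ℕ) : ℝ) + (m + 1) = n := by
    exact_mod_cast (by omega : n - (m + 1) + (m + 1) = n)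
  refine ⟨Multiset.replicate (n - (m + 1)) none + Multiset.replicate (m + 1) (some w),
    by simp; omega, fun _ => eq_or_eq_of_mem_replicate_add, ?_⟩
  rintro d (rfl | rfl)
  · exact emits_none_of_filterMap_eq_replicate hu
      (H := Multiset.replicate (n - (m + 1)) none + Multiset.replicate m (some w))
      (add_le_add le_rfl ((Multiset.replicate_le_replicate _).2 m.le_succ))
      (by rw [cast_card_replicate_add]; linarith [hn.1]) (m := m) (x := w) (by simp)
      (Nat.floor_le (by positivity))
  · exact emits_some_of_filterMap_eq_replicate hu le_rfl
      (by rw [cast_card_replicate_add]; push_cast at hcn ⊢; linarith [hn.1]) (m := m + 1)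
      (by simp)
      (by exact_mod_cast Nat.lt_floor_add_one _)

end Bridges

section Chains

variable {A : Algo} {ψ : PhasePred} {k l n : ℕ} {f : Fin n → Val}

def AllReachable (A : Algo) (ψ : PhasePred) (k l : ℕ) (f : Fin n → Val) (V : Set Val) : Prop :=
  ∀ g : Fin n → Val, (∀ p, g p ∈ V) → roundChain A ψ k l f g

lemma exists_msetOf_eq {s : Multiset Val} (hs : s.card = n) :
    ∃ f : Fin n → Val, msetOf f = s := by
  obtain ⟨L, rfl⟩ := Quot.exists_rep s
  obtain rfl : L.length = n := hs
  exact ⟨L.get, by rw [msetOf, Fin.univ_val_map, List.ofFn_get]; rfl⟩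

lemma mem_msetOf (f : Fin n → Val) (p : Fin n) : f p ∈ msetOf f :=
  Multiset.mem_map_of_mem f (Finset.mem_univ p)

lemma roundChain_single (hk : k ≠ 0) {g : Fin n → Val}
    (h : roundTrans (A.rounds k) (ψ k) f g) : roundChain A ψ k k f g := by
  have hk' : k - 1 ≠ k := by omega
  refine ⟨fun i => if i = k then g else f, by simp [hk'], by simp, fun i hi₁ hi₂ => ?_⟩
  obtain rfl := le_antisymm hi₂ hi₁
  simpa [hk'] using h

lemma roundChain.snoc {g g' : Fin n → Val} (hc : roundChain A ψ k l f g) (hkl : k ≤ l + 1)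
    (h : roundTrans (A.rounds (l + 1)) (ψ (l + 1)) g g') : roundChain A ψ k (l + 1) f g' := by
  obtain ⟨G, hG₀, hGl, hG⟩ := hc
  refine ⟨fun i => if i = l + 1 then g' else G i, by simp [hG₀, show k - 1 ≠ l + 1 by omega],
    by simp, fun i hi₁ hi₂ => ?_⟩
  rcases Nat.lt_or_eq_of_le hi₂ with hi | rfl
  · simpa [show i ≠ l + 1 by omega, show i - 1 ≠ l + 1 by omega] using hG i hi₁ (by omega)
  · simpa [hGl] using h

lemma allReachable_single (hk : k ≠ 0) (heq : ¬ (ψ k).isEqualizer) {W : Set Val}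
    (hW : ∀ d ∈ W, Emits (A.rounds k) (ψ k) n (msetOf f) d) : AllReachable A ψ k k f W :=
  fun _ hg => roundChain_single hk (roundTrans_of_forall_emits heq fun p => hW _ (hg p))

lemma AllReachable.succ {V W : Set Val} (hV : AllReachable A ψ k l f V) (hkl : k ≤ l + 1)
    (heq : ¬ (ψ (l + 1)).isEqualizer) (hb : (A.rounds (l + 1)).Bridges (ψ (l + 1)) n V W) :
    AllReachable A ψ k (l + 1) f W := by
  obtain ⟨s, hs, hsV, hsW⟩ := hb
  obtain ⟨g, rfl⟩ := exists_msetOf_eq hs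
  exact fun h hh => (hV g fun p => hsV _ (mem_msetOf g p)).snoc hkl
    (roundTrans_of_forall_emits heq fun p => hsW _ (hh p))

variable {x y : ℕ} (hk : k ≠ 0) (huni : ∀ j, k ≤ j → j ≤ l → A.hasUni j)
  (hne : ∀ j, k ≤ j → j ≤ l → ¬ (ψ j).isEqualizer)
  (hroom : ∀ j, k ≤ j → j ≤ l → HasRoom (A.rounds j) (ψ j) n)
  (hx : Emits (A.rounds k) (ψ k) n (msetOf f) (some x))
  (hy : Emits (A.rounds k) (ψ k) n (msetOf f) (some y))
include hk huni hne hroom hx hy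

lemma allReachable_pair (hxy : x < y) (i : ℕ) (hki : k ≤ i) (hil : i ≤ l)
    (hm : ∀ j, k ≤ j → j ≤ i → A.hasMult j) :
    AllReachable A ψ k i f {some x, some y} := by
  induction i, hki using Nat.le_induction with
  | base =>
    exact allReachable_single hk (hne k le_rfl hil) (by rintro d (rfl | rfl); exacts [hx, hy])
  | succ i hki ih =>
    exact (ih (by omega) fun j h₁ h₂ => hm j h₁ (by omega)).succ (by omega)
      (hne _ (by omega) hil) ((A.rounds (i + 1)).bridges_pair (huni _ (by omega) hil)
        (hm _ (by omega) le_rfl) (hroom _ (by omega) hil) hxy)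

lemma allReachable_none (hxy : x < y) (i : ℕ) (hki : k ≤ i) (hil : i ≤ l)
    (hm : ∃ j, k ≤ j ∧ j ≤ i ∧ ¬ A.hasMult j) :
    AllReachable A ψ k i f {none, some x} ∧ AllReachable A ψ k i f {none, some y} := by
  induction i, hki using Nat.le_induction with
  | base =>
    obtain ⟨j, hj₁, hj₂, hjm⟩ := hm
    obtain rfl : j = k := by omega
    have hnone := emits_none_of_mults_eq_nil (not_ne_iff.1 hjm) hxy.ne hx hy
    have he := hne j le_rfl hil
    exact ⟨allReachable_single hk he (by rintro d (rfl | rfl); exacts [hnone, hx]),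
      allReachable_single hk he (by rintro d (rfl | rfl); exacts [hnone, hy])⟩
  | succ i hki ih =>
    have hu := huni (i + 1) (by omega) hil
    have he := hne (i + 1) (by omega) hil
    have hr := hroom (i + 1) (by omega) hil
    by_cases hprev : ∃ j, k ≤ j ∧ j ≤ i ∧ ¬ A.hasMult j
    · obtain ⟨hX, hY⟩ := ih (by omega) hprev
      exact ⟨hX.succ (by omega) he ((A.rounds (i + 1)).bridges_none hu hr x),
        hY.succ (by omega) he ((A.rounds (i + 1)).bridges_none hu hr y)⟩
    · simp only [not_exists, not_and, not_not] at hprev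
      obtain ⟨j, hj₁, hj₂, hjm⟩ := hm
      obtain rfl : j = i + 1 := by
        by_contra hj
        exact hjm (hprev j hj₁ (by omega))
      have hmults : (A.rounds (i + 1)).mults = [] := not_ne_iff.1 hjm
      have hPair := allReachable_pair hk huni hne hroom hx hy hxy i hki (by omega) hprev
      refine ⟨hPair.succ (by omega) he
        ((A.rounds (i + 1)).bridges_none_of_mults_eq_nil hu hmults hr hxy.ne), ?_⟩
      rw [Set.pair_comm] at hPair
      exact hPair.succ (by omega) he
        ((A.rounds (i + 1)).bridges_none_of_mults_eq_nil hu hmults hr hxy.ne')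

end Chains

/-- Lemma 9.  Suppose every round has a uni instruction, none
of `ψ↾_k,…,ψ↾_l` is an equalizer, and some round among `k,…,l` has no mult
instruction.  Then for every `θ` and every `f` with `{a,b} ⊆ fire_k(f,ψ)`, both
`f →[ψ↾_k]_k ⋯ →[ψ↾_l]_l bias^?(θ)` and `f →[ψ↾_k]_k ⋯ →[ψ↾_l]_l bias_a^?(θ)`
are possible (every tuple over `{?,b}` is a `bias^?(θ)` and every tuple over
`{?,a}` is a `bias_a^?(θ)`; this holds for all sufficiently large `n`). -/
theorem any_qbias_reachable (A : Algo) (ψ : PhasePred) (k l : ℕ)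
    (hk : 1 ≤ k) (hkl : k ≤ l) (hl : l ≤ A.r)
    (huni : ∀ j, 1 ≤ j → j ≤ A.r → A.hasUni j)
    (hne : ∀ j, k ≤ j → j ≤ l → ¬ (ψ j).isEqualizer)
    (hnm : ∃ j, k ≤ j ∧ j ≤ l ∧ ¬ A.hasMult j) :
    ∃ n₀ : ℕ, ∀ n : ℕ, n₀ ≤ n → ∀ f : Fin n → Val,
      twoValuedQ f →
      fire (A.rounds k) (ψ k) f (some aVal) →
      fire (A.rounds k) (ψ k) f (some bVal) →
      (∀ f' : Fin n → Val, (∀ p, f' p = none ∨ f' p = some bVal) →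
        roundChain A ψ k l f f') ∧
      (∀ f' : Fin n → Val, (∀ p, f' p = none ∨ f' p = some aVal) →
        roundChain A ψ k l f f') := by
  obtain ⟨n₀, hn₀⟩ := Filter.eventually_atTop.1 <|
    (Filter.eventually_all_finset (Finset.Icc k l)).2 fun j _ =>
      eventually_hasRoom (A.rounds j) (ψ j)
  refine ⟨n₀, fun n hn f _ ha hb => ?_⟩
  obtain ⟨hA, hB⟩ := allReachable_none (by omega)
    (fun j _ hj => huni j (by omega) (by omega)) hne
    (fun j hj₁ hj₂ => hn₀ n hn j (Finset.mem_Icc.2 ⟨hj₁, hj₂⟩)) (emits_of_fire ha)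
    (emits_of_fire hb) (show aVal < bVal by decide) l hkl le_rfl hnm
  exact ⟨hB, hA⟩

end HO
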